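/- The reduction relation of the record calculus Λ_R satisfies the Church–Rosser property: for every term M, if M ⟶* M₁ and M ⟶* M₂, then there exists a term M₃ such that M₁ ⟶* M₃ and M₂ ⟶* M₃. -/

import Mathlib

/-- Terms of the record calculus `Λ_R`, with de Bruijn indices for bound variables
(so that terms are identified up to α-conversion) and labels drawn from `ℕ`.
Records are finite lists of label/term pairs; in `merge M fs` the right operand
is syntactically a record. -/
inductive Tm where
  | var : Nat → Tm
  | lam : Tm → Tm
  | app : Tm → Tm → Tm
  | sel : Tm → Nat → Tm
  | rcd : List (Nat × Tm) → Tm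
  | merge : Tm → List (Nat × Tm) → Tm

namespace Tm

/-- The list of field labels of a record. -/
def keys (fs : List (Nat × Tm)) : List Nat := fs.map Prod.fst

/-- The set of field labels `lbl(R)` of a record. -/
def lblR (fs : List (Nat × Tm)) : Finset Nat := (keys fs).toFinset

/-- Record merge on field lists: fields of the first record whose label does not
occur in the second record, followed by all fields of the second record. -/
def mergeFields (fs gs : List (Nat × Tm)) : List (Nat × Tm) :=
  fs.filter (fun p => decide (p.1 ∉ keys gs)) ++ gs

end Tm
namespace Tm

def liftF (f : Nat → Nat) : Nat → Nat
  | 0 => 0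
  | n + 1 => f n + 1

mutual
/-- Renaming of (de Bruijn) variables. -/
def rename (f : Nat → Nat) : Tm → Tm
  | var x => var (f x)
  | lam M => lam (rename (liftF f) M)
  | app M N => app (rename f M) (rename f N)
  | sel M l => sel (rename f M) l
  | rcd fs => rcd (renameFields f fs)
  | merge M fs => merge (rename f M) (renameFields f fs)
def renameFields (f : Nat → Nat) : List (Nat × Tm) → List (Nat × Tm)
  | [] => []
  | (l, M) :: fs => (l, rename f M) :: renameFields f fs
end

def upS (s : Nat → Tm) : Nat → Tm
  | 0 => var 0
  | n + 1 => rename Nat.succ (s n)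

mutual
/-- Capture-avoiding (parallel) substitution. -/
def subst (s : Nat → Tm) : Tm → Tm
  | var x => s x
  | lam M => lam (subst (upS s) M)
  | app M N => app (subst s M) (subst s N)
  | sel M l => sel (subst s M) l
  | rcd fs => rcd (substFields s fs)
  | merge M fs => merge (subst s M) (substFields s fs)
def substFields (s : Nat → Tm) : List (Nat × Tm) → List (Nat × Tm)
  | [] => []
  | (l, M) :: fs => (l, subst s M) :: substFields s fs
end

/-- `M[N/x]` for the outermost bound variable: capture-avoiding substitution of `N`
for the de Bruijn index `0` in `M`. -/
def subst0 (N M : Tm) : Tm :=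
  subst (fun n => match n with | 0 => N | n + 1 => var n) M

end Tm
/-- The reduction relation of `Λ_R`: the least compatible relation containing
(β), (sel) and (⊕). -/
inductive Red : Tm → Tm → Prop where
  | beta (M N : Tm) : Red (.app (.lam M) N) (Tm.subst0 N M)
  | sel {fs : List (Nat × Tm)} {l : Nat} {M : Tm} :
      List.lookup l fs = some M → Red (.sel (.rcd fs) l) M
  | mergeRcd (fs gs : List (Nat × Tm)) :
      Red (.merge (.rcd fs) gs) (.rcd (Tm.mergeFields fs gs))
  | appL {M M' : Tm} (N : Tm) : Red M M' → Red (.app M N) (.app M' N)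
  | appR (M : Tm) {N N' : Tm} : Red N N' → Red (.app M N) (.app M N')
  | lam {M M' : Tm} : Red M M' → Red (.lam M) (.lam M')
  | selC {M M' : Tm} (l : Nat) : Red M M' → Red (.sel M l) (.sel M' l)
  | mergeL {M M' : Tm} (fs : List (Nat × Tm)) : Red M M' → Red (.merge M fs) (.merge M' fs)
  | rcdField {M M' : Tm} (fs gs : List (Nat × Tm)) (l : Nat) : Red M M' →
      Red (.rcd (fs ++ (l, M) :: gs)) (.rcd (fs ++ (l, M') :: gs))
  | mergeField (N : Tm) {M M' : Tm} (fs gs : List (Nat × Tm)) (l : Nat) : Red M M' →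
      Red (.merge N (fs ++ (l, M) :: gs)) (.merge N (fs ++ (l, M') :: gs))

/-- Reflexive–transitive closure `⟶*` of reduction. -/
def RedStar : Tm → Tm → Prop := Relation.ReflTransGen Red

/-!
Tait–Martin-Löf's method, with Takahashi's complete development. Parallel reduction `Par`
contracts an arbitrary set of redexes at once; it contains `⟶` and is contained in `⟶*`,
so its reflexive–transitive closure is `⟶*`. It has the diamond property because every
parallel reduct of `M` parallel-reduces to `develop M`, the term obtained by contracting
all redexes of `M`. The (sel) and (⊕) redexes are treated like β-redexes; what they need is
that renaming, substitution and parallel reduction commute with field lookup and record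
merge.
-/

open Relation

theorem List.lookup_map_prodMap_id {α β γ : Type*} [BEq α] (g : β → γ) (a : α) :
    ∀ l : List (α × β), (l.map (Prod.map id g)).lookup a = (l.lookup a).map g
  | [] => rfl
  | (b, x) :: l => by
      cases h : a == b <;> simp [List.lookup, h, List.lookup_map_prodMap_id g a l]

namespace Tm

theorem liftF_comp (f g : ℕ → ℕ) :
    liftF (fun n => f (g n)) = fun n => liftF f (liftF g n) := by
  funext n; cases n <;> rfl

mutual
theorem rename_rename (f g : ℕ → ℕ) :
    ∀ M, rename f (rename g M) = rename (fun n => f (g n)) M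
  | .var x => by simp [rename]
  | .lam M => by simp [rename, rename_rename (liftF f) (liftF g) M, liftF_comp]
  | .app M N => by simp [rename, rename_rename f g M, rename_rename f g N]
  | .sel M l => by simp [rename, rename_rename f g M]
  | .rcd fs => by simp [rename, renameFields_renameFields f g fs]
  | .merge M fs => by simp [rename, rename_rename f g M, renameFields_renameFields f g fs]
theorem renameFields_renameFields (f g : ℕ → ℕ) :
    ∀ fs, renameFields f (renameFields g fs) = renameFields (fun n => f (g n)) fs
  | [] => rfl
  | (l, M) :: fs => by simp [renameFields, rename_rename f g M, renameFields_renameFields f g fs]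
end

theorem upS_comp_liftF (s : ℕ → Tm) (f : ℕ → ℕ) :
    upS (fun n => s (f n)) = fun n => upS s (liftF f n) := by
  funext n; cases n <;> rfl

mutual
theorem subst_rename (s : ℕ → Tm) (f : ℕ → ℕ) :
    ∀ M, subst s (rename f M) = subst (fun n => s (f n)) M
  | .var x => by simp [rename, subst]
  | .lam M => by simp [rename, subst, subst_rename (upS s) (liftF f) M, upS_comp_liftF]
  | .app M N => by simp [rename, subst, subst_rename s f M, subst_rename s f N]
  | .sel M l => by simp [rename, subst, subst_rename s f M]
  | .rcd fs => by simp [rename, subst, substFields_renameFields s f fs]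
  | .merge M fs => by simp [rename, subst, subst_rename s f M, substFields_renameFields s f fs]
theorem substFields_renameFields (s : ℕ → Tm) (f : ℕ → ℕ) :
    ∀ fs, substFields s (renameFields f fs) = substFields (fun n => s (f n)) fs
  | [] => rfl
  | (l, M) :: fs => by
      simp [renameFields, substFields, subst_rename s f M, substFields_renameFields s f fs]
end

theorem upS_rename (s : ℕ → Tm) (f : ℕ → ℕ) :
    upS (fun n => rename f (s n)) = fun n => rename (liftF f) (upS s n) := by
  funext n
  cases n with
  | zero => rfl
  | succ n => simp only [upS, rename_rename]; rfl

mutual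
theorem rename_subst (f : ℕ → ℕ) (s : ℕ → Tm) :
    ∀ M, rename f (subst s M) = subst (fun n => rename f (s n)) M
  | .var x => by simp [subst]
  | .lam M => by simp [rename, subst, rename_subst (liftF f) (upS s) M, upS_rename]
  | .app M N => by simp [rename, subst, rename_subst f s M, rename_subst f s N]
  | .sel M l => by simp [rename, subst, rename_subst f s M]
  | .rcd fs => by simp [rename, subst, renameFields_substFields f s fs]
  | .merge M fs => by simp [rename, subst, rename_subst f s M, renameFields_substFields f s fs]
theorem renameFields_substFields (f : ℕ → ℕ) (s : ℕ → Tm) :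
    ∀ fs, renameFields f (substFields s fs) = substFields (fun n => rename f (s n)) fs
  | [] => rfl
  | (l, M) :: fs => by
      simp [renameFields, substFields, rename_subst f s M, renameFields_substFields f s fs]
end

theorem upS_subst (s t : ℕ → Tm) :
    upS (fun n => subst s (t n)) = fun n => subst (upS s) (upS t n) := by
  funext n
  cases n with
  | zero => rfl
  | succ n => simp only [upS, rename_subst, subst_rename]

mutual
theorem subst_subst (s t : ℕ → Tm) :
    ∀ M, subst s (subst t M) = subst (fun n => subst s (t n)) M
  | .var x => by simp [subst]
  | .lam M => by simp [subst, subst_subst (upS s) (upS t) M, upS_subst]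
  | .app M N => by simp [subst, subst_subst s t M, subst_subst s t N]
  | .sel M l => by simp [subst, subst_subst s t M]
  | .rcd fs => by simp [subst, substFields_substFields s t fs]
  | .merge M fs => by simp [subst, subst_subst s t M, substFields_substFields s t fs]
theorem substFields_substFields (s t : ℕ → Tm) :
    ∀ fs, substFields s (substFields t fs) = substFields (fun n => subst s (t n)) fs
  | [] => rfl
  | (l, M) :: fs => by simp [substFields, subst_subst s t M, substFields_substFields s t fs]
end

theorem upS_var : upS var = var := by
  funext n; cases n <;> rfl

mutual
theorem subst_var : ∀ M, subst var M = M
  | .var x => by simp [subst]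
  | .lam M => by simp [subst, upS_var, subst_var M]
  | .app M N => by simp [subst, subst_var M, subst_var N]
  | .sel M l => by simp [subst, subst_var M]
  | .rcd fs => by simp [subst, substFields_var fs]
  | .merge M fs => by simp [subst, subst_var M, substFields_var fs]
theorem substFields_var : ∀ fs, substFields var fs = fs
  | [] => rfl
  | (l, M) :: fs => by simp [substFields, subst_var M, substFields_var fs]
end

theorem subst_subst0 (s : ℕ → Tm) (N M : Tm) :
    subst s (subst0 N M) = subst0 (subst s N) (subst (upS s) M) := by
  simp only [subst0, subst_subst]
  congr 1
  funext n
  cases n with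
  | zero => rfl
  | succ n => simp [subst, upS, subst_rename, subst_var]

theorem rename_subst0 (f : ℕ → ℕ) (N M : Tm) :
    rename f (subst0 N M) = subst0 (rename f N) (rename (liftF f) M) := by
  simp only [subst0, rename_subst, subst_rename]
  congr 1
  funext n
  cases n with
  | zero => rfl
  | succ n => simp [rename, liftF]

theorem renameFields_eq_map (f : ℕ → ℕ) :
    ∀ fs, renameFields f fs = fs.map (Prod.map id (rename f))
  | [] => rfl
  | (l, M) :: fs => by simp [renameFields, renameFields_eq_map f fs]

theorem substFields_eq_map (s : ℕ → Tm) :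
    ∀ fs, substFields s fs = fs.map (Prod.map id (subst s))
  | [] => rfl
  | (l, M) :: fs => by simp [substFields, substFields_eq_map s fs]

theorem keys_map_prodMap (g : Tm → Tm) (fs : List (ℕ × Tm)) :
    keys (fs.map (Prod.map id g)) = keys fs := by
  simp [keys, Function.comp_def]

theorem mergeFields_map_prodMap (g : Tm → Tm) (fs gs : List (ℕ × Tm)) :
    mergeFields (fs.map (Prod.map id g)) (gs.map (Prod.map id g)) =
      (mergeFields fs gs).map (Prod.map id g) := by
  simp [mergeFields, keys_map_prodMap, List.filter_map, Function.comp_def]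

end Tm

open Tm

inductive Par : Tm → Tm → Prop where
  | var (x : ℕ) : Par (.var x) (.var x)
  | lam {M M'} : Par M M' → Par (.lam M) (.lam M')
  | app {M M' N N'} : Par M M' → Par N N' → Par (.app M N) (.app M' N')
  | beta {M M' N N'} : Par M M' → Par N N' → Par (.app (.lam M) N) (subst0 N' M')
  | selC {M M'} (l : ℕ) : Par M M' → Par (.sel M l) (.sel M' l)
  | selR {fs fs' : List (ℕ × Tm)} {l : ℕ} {M' : Tm} :
      Par (.rcd fs) (.rcd fs') → fs'.lookup l = some M' → Par (.sel (.rcd fs) l) M'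
  | rcdNil : Par (.rcd []) (.rcd [])
  | rcdCons {M M'} {fs fs' : List (ℕ × Tm)} (l : ℕ) :
      Par M M' → Par (.rcd fs) (.rcd fs') → Par (.rcd ((l, M) :: fs)) (.rcd ((l, M') :: fs'))
  | mergeC {M M'} {fs fs' : List (ℕ × Tm)} :
      Par M M' → Par (.rcd fs) (.rcd fs') → Par (.merge M fs) (.merge M' fs')
  | mergeR {fs fs' gs gs' : List (ℕ × Tm)} :
      Par (.rcd fs) (.rcd fs') → Par (.rcd gs) (.rcd gs') →
      Par (.merge (.rcd fs) gs) (.rcd (mergeFields fs' gs'))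

namespace Par

mutual
protected theorem refl : ∀ M, Par M M
  | .var x => .var x
  | .lam M => .lam (Par.refl M)
  | .app M N => .app (Par.refl M) (Par.refl N)
  | .sel M l => .selC l (Par.refl M)
  | .rcd fs => rcd_refl fs
  | .merge M fs => .mergeC (Par.refl M) (rcd_refl fs)
theorem rcd_refl : ∀ fs, Par (.rcd fs) (.rcd fs)
  | [] => .rcdNil
  | (l, M) :: fs => .rcdCons l (Par.refl M) (rcd_refl fs)
end

theorem lam_inv {M N : Tm} (h : Par (.lam M) (.lam N)) : Par M N := by
  cases h with
  | lam h => exact h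

theorem rcd_inv {fs : List (ℕ × Tm)} {X : Tm} (h : Par (.rcd fs) X) : ∃ gs, X = .rcd gs := by
  cases h <;> exact ⟨_, rfl⟩

theorem keys_eq {fs gs : List (ℕ × Tm)} (h : Par (.rcd fs) (.rcd gs)) : keys fs = keys gs := by
  induction fs generalizing gs with
  | nil => cases h; rfl
  | cons p fs ih =>
      cases h with
      | rcdCons l _ hfs => simpa [keys] using ih hfs

theorem lookup {fs gs : List (ℕ × Tm)} {l : ℕ} {M : Tm} (h : Par (.rcd fs) (.rcd gs))
    (hl : fs.lookup l = some M) : ∃ M', gs.lookup l = some M' ∧ Par M M' := by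
  induction fs generalizing gs with
  | nil => simp at hl
  | cons p fs ih =>
      cases h with
      | rcdCons l' hM hfs =>
          by_cases hll : l = l'
          · subst hll
            simp only [List.lookup_cons_self, Option.some.injEq] at hl ⊢
            exact ⟨_, rfl, hl ▸ hM⟩
          · simp only [List.lookup, beq_false_of_ne hll] at hl ⊢
            exact ih hfs hl

theorem append {as as' bs bs' : List (ℕ × Tm)} (ha : Par (.rcd as) (.rcd as'))
    (hb : Par (.rcd bs) (.rcd bs')) : Par (.rcd (as ++ bs)) (.rcd (as' ++ bs')) := by
  induction as generalizing as' with
  | nil => cases ha; exact hb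
  | cons p as ih =>
      cases ha with
      | rcdCons l hM has => exact .rcdCons l hM (ih has)

theorem filter {fs fs' : List (ℕ × Tm)} (p : ℕ → Bool) (h : Par (.rcd fs) (.rcd fs')) :
    Par (.rcd (fs.filter (p ·.1))) (.rcd (fs'.filter (p ·.1))) := by
  induction fs generalizing fs' with
  | nil => cases h; exact .rcdNil
  | cons q fs ih =>
      cases h with
      | rcdCons l hM hfs =>
          by_cases hl : p l
          · simpa [List.filter_cons, hl] using .rcdCons l hM (ih hfs)
          · simpa [List.filter_cons, hl] using ih hfs

theorem mergeFields {fs fs' gs gs' : List (ℕ × Tm)} (hf : Par (.rcd fs) (.rcd fs'))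
    (hg : Par (.rcd gs) (.rcd gs')) :
    Par (.rcd (mergeFields fs gs)) (.rcd (mergeFields fs' gs')) := by
  rw [Tm.mergeFields, Tm.mergeFields, keys_eq hg]
  exact (hf.filter (fun l => decide (l ∉ keys gs'))).append hg

theorem rename {M M' : Tm} (h : Par M M') (f : ℕ → ℕ) : Par (rename f M) (rename f M') := by
  induction h generalizing f with
  | var x => exact .var _
  | lam _ ih => exact .lam (ih _)
  | app _ _ ihM ihN => exact .app (ihM f) (ihN f)
  | beta _ _ ihM ihN => rw [rename_subst0]; exact .beta (ihM _) (ihN f)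
  | selC l _ ih => exact .selC l (ih f)
  | selR _ hl ih =>
      refine .selR (ih f) ?_
      simp [renameFields_eq_map, List.lookup_map_prodMap_id, hl]
  | rcdNil => exact .rcdNil
  | rcdCons l _ _ ihM ihfs => exact .rcdCons l (ihM f) (ihfs f)
  | mergeC _ _ ihM ihfs => exact .mergeC (ihM f) (ihfs f)
  | mergeR _ _ ihf ihg =>
      simpa only [Tm.rename, renameFields_eq_map, mergeFields_map_prodMap] using
        Par.mergeR (ihf f) (ihg f)

theorem upS {s s' : ℕ → Tm} (hs : ∀ n, Par (s n) (s' n)) : ∀ n, Par (upS s n) (upS s' n)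
  | 0 => .var 0
  | n + 1 => (hs n).rename Nat.succ

theorem subst {M M' : Tm} (h : Par M M') {s s' : ℕ → Tm} (hs : ∀ n, Par (s n) (s' n)) :
    Par (subst s M) (subst s' M') := by
  induction h generalizing s s' with
  | var x => exact hs x
  | lam _ ih => exact .lam (ih (upS hs))
  | app _ _ ihM ihN => exact .app (ihM hs) (ihN hs)
  | beta _ _ ihM ihN => rw [subst_subst0]; exact .beta (ihM (upS hs)) (ihN hs)
  | selC l _ ih => exact .selC l (ih hs)
  | selR _ hl ih =>
      refine .selR (ih hs) ?_
      simp [substFields_eq_map, List.lookup_map_prodMap_id, hl]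
  | rcdNil => exact .rcdNil
  | rcdCons l _ _ ihM ihfs => exact .rcdCons l (ihM hs) (ihfs hs)
  | mergeC _ _ ihM ihfs => exact .mergeC (ihM hs) (ihfs hs)
  | mergeR _ _ ihf ihg =>
      simpa only [Tm.subst, substFields_eq_map, mergeFields_map_prodMap] using
        Par.mergeR (ihf hs) (ihg hs)

theorem subst0 {M M' N N' : Tm} (hM : Par M M') (hN : Par N N') :
    Par (subst0 N M) (subst0 N' M') :=
  hM.subst fun
    | 0 => hN
    | n + 1 => .var n

end Par

mutual
def develop : Tm → Tm
  | .var x => .var x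
  | .lam M => .lam (develop M)
  | .app (.lam M) N => subst0 (develop N) (develop M)
  | .app M N => .app (develop M) (develop N)
  | .sel (.rcd fs) l => ((developFields fs).lookup l).getD (.sel (.rcd (developFields fs)) l)
  | .sel M l => .sel (develop M) l
  | .rcd fs => .rcd (developFields fs)
  | .merge (.rcd fs) gs => .rcd (mergeFields (developFields fs) (developFields gs))
  | .merge M gs => .merge (develop M) (developFields gs)
def developFields : List (ℕ × Tm) → List (ℕ × Tm)
  | [] => []
  | (l, M) :: fs => (l, develop M) :: developFields fs
end

theorem develop_sel_rcd (fs : List (ℕ × Tm)) (l : ℕ) :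
    develop (.sel (.rcd fs) l) =
      ((developFields fs).lookup l).getD (.sel (.rcd (developFields fs)) l) := by
  rw [develop]

theorem Par.sel_develop {fs gs : List (ℕ × Tm)} (l : ℕ)
    (h : Par (.rcd gs) (.rcd (developFields fs))) :
    Par (.sel (.rcd gs) l) (develop (.sel (.rcd fs) l)) := by
  rw [develop_sel_rcd]
  cases hl : (developFields fs).lookup l with
  | some P => exact .selR h hl
  | none => exact .selC l h

theorem Par.triangle {M N : Tm} (h : Par M N) : Par N (develop M) := by
  induction h with
  | var x => exact .var x
  | lam _ ih => exact .lam ih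
  | @app M _ _ _ hM _ ihM ihN =>
      cases M
      case lam P =>
        cases hM with
        | lam _ => exact .beta ihM.lam_inv ihN
      all_goals exact .app ihM ihN
  | beta _ _ ihM ihN => exact ihM.subst0 ihN
  | @selC M _ l hM ih =>
      cases M
      case rcd fs =>
        obtain ⟨gs, rfl⟩ := hM.rcd_inv
        exact .sel_develop l ih
      all_goals exact .selC l ih
  | selR _ hl ih =>
      obtain ⟨P, hP, hM'P⟩ := ih.lookup hl
      rwa [develop_sel_rcd, hP]
  | rcdNil => exact .rcdNil
  | rcdCons l _ _ ihM ihfs => exact .rcdCons l ihM ihfs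
  | @mergeC M _ _ _ hM _ ihM ihfs =>
      cases M
      case rcd fs =>
        obtain ⟨fs', rfl⟩ := hM.rcd_inv
        exact .mergeR ihM ihfs
      all_goals exact .mergeC ihM ihfs
  | mergeR _ _ ihf ihg => exact ihf.mergeFields ihg

theorem Par.diamond {M N₁ N₂ : Tm} (h₁ : Par M N₁) (h₂ : Par M N₂) :
    ∃ P, Par N₁ P ∧ Par N₂ P :=
  ⟨develop M, h₁.triangle, h₂.triangle⟩

theorem Par.rcd_update {M M' : Tm} (h : Par M M') (fs gs : List (ℕ × Tm)) (l : ℕ) :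
    Par (.rcd (fs ++ (l, M) :: gs)) (.rcd (fs ++ (l, M') :: gs)) :=
  (Par.rcd_refl fs).append (.rcdCons l h (Par.rcd_refl gs))

theorem Red.par {M N : Tm} (h : Red M N) : Par M N := by
  induction h with
  | beta M N => exact .beta (.refl M) (.refl N)
  | sel hl => exact .selR (.rcd_refl _) hl
  | mergeRcd fs gs => exact .mergeR (.rcd_refl fs) (.rcd_refl gs)
  | appL N _ ih => exact .app ih (.refl N)
  | appR M _ ih => exact .app (.refl M) ih
  | lam _ ih => exact .lam ih
  | selC l _ ih => exact .selC l ih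
  | mergeL fs _ ih => exact .mergeC ih (.rcd_refl fs)
  | rcdField fs gs l _ ih => exact ih.rcd_update fs gs l
  | mergeField N fs gs l _ ih => exact .mergeC (.refl N) (ih.rcd_update fs gs l)

namespace RedStar

theorem lam {M M' : Tm} (h : RedStar M M') : RedStar (.lam M) (.lam M') :=
  ReflTransGen.lift Tm.lam (fun _ _ => Red.lam) _ _ h

theorem app {M M' N N' : Tm} (hM : RedStar M M') (hN : RedStar N N') :
    RedStar (.app M N) (.app M' N') :=
  (ReflTransGen.lift (Tm.app · N) (fun _ _ => Red.appL N) _ _ hM).trans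
    (ReflTransGen.lift (Tm.app M' ·) (fun _ _ => Red.appR M') _ _ hN)

theorem sel {M M' : Tm} (l : ℕ) (h : RedStar M M') : RedStar (.sel M l) (.sel M' l) :=
  ReflTransGen.lift (Tm.sel · l) (fun _ _ => Red.selC l) _ _ h

-- Every reduction step out of a record is a step inside one of its fields.
theorem fields {F : List (ℕ × Tm) → Tm}
    (hF : ∀ fs gs l M M', Red M M' → Red (F (fs ++ (l, M) :: gs)) (F (fs ++ (l, M') :: gs)))
    {fs fs' : List (ℕ × Tm)} (h : RedStar (.rcd fs) (.rcd fs')) : RedStar (F fs) (F fs') := by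
  generalize hX : Tm.rcd fs = X at h
  induction h using ReflTransGen.head_induction_on generalizing fs with
  | refl => cases hX; exact .refl
  | head hstep _ ih =>
      subst hX
      cases hstep with
      | rcdField as bs l hM => exact .head (hF as bs l _ _ hM) (ih rfl)

theorem rcd_cons {M M' : Tm} {fs fs' : List (ℕ × Tm)} (l : ℕ) (hM : RedStar M M')
    (hfs : RedStar (.rcd fs) (.rcd fs')) :
    RedStar (.rcd ((l, M) :: fs)) (.rcd ((l, M') :: fs')) :=
  (ReflTransGen.lift (fun X => Tm.rcd ((l, X) :: fs))
      (fun _ _ => Red.rcdField [] fs l) _ _ hM).trans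
    (fields (F := fun gs => .rcd ((l, M') :: gs))
      (fun as bs l' _ _ => Red.rcdField ((l, M') :: as) bs l') hfs)

theorem merge {M M' : Tm} {fs fs' : List (ℕ × Tm)} (hM : RedStar M M')
    (hfs : RedStar (.rcd fs) (.rcd fs')) : RedStar (.merge M fs) (.merge M' fs') :=
  (ReflTransGen.lift (Tm.merge · fs) (fun _ _ => Red.mergeL fs) _ _ hM).trans
    (fields (fun as bs l _ _ => Red.mergeField M' as bs l) hfs)

end RedStar

theorem Par.redStar {M N : Tm} (h : Par M N) : RedStar M N := by
  induction h with
  | var x => exact .refl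
  | lam _ ih => exact ih.lam
  | app _ _ ihM ihN => exact ihM.app ihN
  | beta _ _ ihM ihN => exact .tail (ihM.lam.app ihN) (.beta _ _)
  | selC l _ ih => exact ih.sel l
  | selR _ hl ih => exact .tail (ih.sel _) (.sel hl)
  | rcdNil => exact .refl
  | rcdCons l _ _ ihM ihfs => exact .rcd_cons l ihM ihfs
  | mergeC _ _ ihM ihfs => exact ihM.merge ihfs
  | mergeR _ _ ihf ihg => exact .tail (ihf.merge ihg) (.mergeRcd _ _)

theorem reflTransGen_par_eq_redStar : ReflTransGen Par = RedStar :=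
  le_antisymm (reflTransGen_closed fun _ _ h => h.redStar) (ReflTransGen.mono fun _ _ h => h.par)

/-- **Church–Rosser property** of the reduction relation of `Λ_R`. -/
theorem church_rosser (M M₁ M₂ : Tm) (h₁ : RedStar M M₁) (h₂ : RedStar M M₂) :
    ∃ M₃, RedStar M₁ M₃ ∧ RedStar M₂ M₃ := by
  rw [← reflTransGen_par_eq_redStar] at *
  refine Relation.church_rosser (fun _ _ _ hb hc => ?_) h₁ h₂
  obtain ⟨d, hbd, hcd⟩ := hb.diamond hc
  exact ⟨d, .single hbd, .single hcd⟩
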